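/- arXiv:2209.08804 — 2 statements merged into one kernel-verified Lean document; each statement's English description precedes it below -/
import Mathlib

section
/- Let H be a 3-edge-connected cubic graph containing a triangle T such that the graph H/T obtained by contracting T to a single vertex is simple and 3-edge-connected. Then F(H) = F(H/T). -/
namespace Frank

variable {V : Type*}

/-- An orientation of a simple graph `G`: each edge gets exactly one direction. -/
structure Orient (G : SimpleGraph V) where
  dir : V → V → Prop
  dir_iff : ∀ u v, (dir u v ∨ dir v u) ↔ G.Adj u v
  not_both : ∀ u v, dir u v → ¬ dir v u

/-- A relation (digraph) is strongly connected. -/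
def IsStrong (r : V → V → Prop) : Prop :=
  ∀ x y : V, Relation.ReflTransGen r x y

/-- Delete the single arc `(u,v)` from the digraph `r`. -/
def delArc (r : V → V → Prop) (u v : V) : V → V → Prop :=
  fun a b => r a b ∧ ¬(a = u ∧ b = v)

/-- Delete (both possible arcs of) the edge `uv` from the digraph `r`. -/
def delEdge (r : V → V → Prop) (u v : V) : V → V → Prop :=
  fun a b => r a b ∧ ¬((a = u ∧ b = v) ∨ (a = v ∧ b = u))

/-- The edge `uv` is deletable in the orientation `O`: after removing its arc the
orientation stays strongly connected. -/
def EdgeDeletable {G : SimpleGraph V} (O : Orient G) (u v : V) : Prop :=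
  IsStrong (delEdge O.dir u v)

/-- The Frank number of `G`: the least `k` admitting `k` strongly connected orientations
such that every edge is deletable in at least one of them. -/
noncomputable def frankNumber (G : SimpleGraph V) : ℕ :=
  sInf {k | ∃ Os : Fin k → Orient G, (∀ i, IsStrong (Os i).dir) ∧
    ∀ u v, G.Adj u v → ∃ i, EdgeDeletable (Os i) u v}

/-- `G` is 2-edge-connected: connected and stays connected after deleting any single edge. -/
def TwoEdgeConn (G : SimpleGraph V) : Prop :=
  G.Connected ∧ ∀ e : Sym2 V, (G.deleteEdges {e}).Connected

/-- `G` is 3-edge-connected: connected and stays connected after deleting any two edges. -/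
def ThreeEdgeConn (G : SimpleGraph V) : Prop :=
  G.Connected ∧ ∀ e f : Sym2 V, (G.deleteEdges {e, f}).Connected

/-- The underlying relation of the local cubic modification of `G` at `v`:
`v` is replaced by a cycle on `ZMod d`, and `m` matches the cycle vertices to
the former neighbours of `v`. -/
def lcmRel (G : SimpleGraph V) (v : V) (d : ℕ) (m : ZMod d → V) :
    ({w : V // w ≠ v} ⊕ ZMod d) → ({w : V // w ≠ v} ⊕ ZMod d) → Prop
  | Sum.inl w, Sum.inl w' => G.Adj w.1 w'.1
  | Sum.inl w, Sum.inr i => w.1 = m i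
  | Sum.inr i, Sum.inr j => j = i + 1
  | Sum.inr _, Sum.inl _ => False

/-- The local cubic modification `G_v(M)` of `G` at `v` given the matching `m`. -/
def localCubicMod (G : SimpleGraph V) (v : V) (d : ℕ) (m : ZMod d → V) :
    SimpleGraph ({w : V // w ≠ v} ⊕ ZMod d) :=
  SimpleGraph.fromRel (lcmRel G v d m)

/-!
Both inclusions between the sets of admissible numbers of orientations hold. Contracting the
new triangle of `H = localCubicMod G v 3 m` back to `v` turns a strong orientation of `H` into
one of `G`; every edge of `G` lifts to an edge of `H` outside the triangle, and if the lift is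
deletable upstairs, the edge is deletable downstairs. This works for a cycle of any length.

Conversely, a strong orientation `O` of `G` extends to `H` through an orientation `T` of the
triangle that routes every arc of `O` entering `v` to every arc leaving `v`. For each neighbour
`m j` pick an orientation `O (c j)` in which the edge `m j v` is deletable; then the other two
ports of `v` point in opposite directions in `O (c j)`. If the `c j` are distinct, cyclic
triangles suffice, `T (c j)` covering the triangle edge opposite to `j`. If
`c (j + 1) = c (j + 2) ≠ c j`, a transitive triangle at `c j` and cyclic ones elsewhere cover
the three triangle edges. All `c j` cannot coincide, as the three ports cannot be pairwise
opposite.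
-/

open Relation

def AdmitsFrankFamily (G : SimpleGraph V) (k : ℕ) : Prop :=
  ∃ Os : Fin k → Orient G, (∀ i, IsStrong (Os i).dir) ∧
    ∀ u v, G.Adj u v → ∃ i, EdgeDeletable (Os i) u v

section Digraph

variable {α β : Type*}

lemma IsStrong.mono {r s : α → α → Prop} (h : r ≤ s) (hr : IsStrong r) : IsStrong s :=
  fun x y => ReflTransGen.mono h _ _ (hr x y)

lemma IsStrong.of_surjective {r : α → α → Prop} {s : β → β → Prop} {f : α → β}
    (hf : f.Surjective) (h : ∀ x y, r x y → ReflTransGen s (f x) (f y)) (hr : IsStrong r) :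
    IsStrong s := by
  intro a b
  obtain ⟨x, rfl⟩ := hf a
  obtain ⟨y, rfl⟩ := hf b
  exact ReflTransGen.lift' f h _ _ (hr x y)

lemma delEdge_comm (r : α → α → Prop) (a b : α) : delEdge r a b = delEdge r b a := by
  funext x y
  simp only [delEdge, or_comm]

lemma delEdge_congr_sym2 (r : α → α → Prop) {a b a' b' : α} (h : s(a, b) = s(a', b')) :
    delEdge r a b = delEdge r a' b' := by
  rcases Sym2.eq_iff.1 h with ⟨rfl, rfl⟩ | ⟨rfl, rfl⟩
  exacts [rfl, delEdge_comm r a b]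

lemma EdgeDeletable.symm {G : SimpleGraph α} {O : Orient G} {a b : α}
    (h : EdgeDeletable O a b) : EdgeDeletable O b a := by
  rwa [EdgeDeletable, delEdge_comm]

lemma Orient.adj_of_dir {G : SimpleGraph α} {O : Orient G} {a b : α} (h : O.dir a b) :
    G.Adj a b :=
  (O.dir_iff a b).1 (Or.inl h)

end Digraph

section Ports

variable {G : SimpleGraph V} {v : V} {d : ℕ} {m : ZMod d → V}

lemma adj_apply_of_range_eq (hr : Set.range m = G.neighborSet v) (j : ZMod d) :
    G.Adj v (m j) := by
  have hj : m j ∈ Set.range m := Set.mem_range_self j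
  rwa [hr] at hj

lemma exists_apply_eq_of_adj (hr : Set.range m = G.neighborSet v) {a : V} (ha : G.Adj v a) :
    ∃ j, m j = a := by
  simpa [← Set.mem_range, hr] using ha

lemma exists_in_port (hr : Set.range m = G.neighborSet v) {r : V → V → Prop}
    (hadj : ∀ a b, r a b → G.Adj a b) (hs : IsStrong r) : ∃ i, r (m i) v := by
  rcases (hs (m 0) v).cases_tail with h | ⟨a, -, ha⟩
  · exact absurd h (adj_apply_of_range_eq hr 0).ne
  · obtain ⟨i, rfl⟩ := exists_apply_eq_of_adj hr (hadj _ _ ha).symm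
    exact ⟨i, ha⟩

lemma exists_out_port (hr : Set.range m = G.neighborSet v) {r : V → V → Prop}
    (hadj : ∀ a b, r a b → G.Adj a b) (hs : IsStrong r) : ∃ j, r v (m j) := by
  rcases (hs v (m 0)).cases_head with h | ⟨a, ha, -⟩
  · exact absurd h (adj_apply_of_range_eq hr 0).ne
  · obtain ⟨j, rfl⟩ := exists_apply_eq_of_adj hr (hadj _ _ ha)
    exact ⟨j, ha⟩

lemma Orient.out_iff_not_in (hr : Set.range m = G.neighborSet v) (O : Orient G) (j : ZMod d) :
    O.dir v (m j) ↔ ¬ O.dir (m j) v :=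
  ⟨fun h h' => O.not_both _ _ h h',
    ((O.dir_iff _ _).2 (adj_apply_of_range_eq hr j)).resolve_right⟩

lemma Orient.exists_ports_of_edgeDeletable (hr : Set.range m = G.neighborSet v) (O : Orient G)
    {j : ZMod d} (hj : EdgeDeletable O (m j) v) :
    ∃ s t, s ≠ j ∧ t ≠ j ∧ s ≠ t ∧ O.dir (m s) v ∧ O.dir v (m t) := by
  have hadj : ∀ a b, delEdge O.dir (m j) v a b → G.Adj a b := fun _ _ h => O.adj_of_dir h.1
  obtain ⟨s, hs, hs'⟩ := exists_in_port hr hadj hj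
  obtain ⟨t, ht, ht'⟩ := exists_out_port hr hadj hj
  refine ⟨s, t, ?_, ?_, ?_, hs, ht⟩
  · rintro rfl; exact hs' (.inl ⟨rfl, rfl⟩)
  · rintro rfl; exact ht' (.inr ⟨rfl, rfl⟩)
  · rintro rfl; exact O.not_both _ _ hs ht

lemma delEdge_pendant_in (hm : m.Injective) (hr : Set.range m = G.neighborSet v)
    {r : V → V → Prop} {s j : ZMod d} (hsj : s ≠ j) (hs : r (m s) v) :
    delEdge r (m j) v (m s) v :=
  ⟨hs, by simp [hm.ne hsj, (adj_apply_of_range_eq hr s).ne']⟩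

lemma delEdge_pendant_out (hm : m.Injective) (hr : Set.range m = G.neighborSet v)
    {r : V → V → Prop} {t j : ZMod d} (htj : t ≠ j) (ht : r v (m t)) :
    delEdge r (m j) v v (m t) :=
  ⟨ht, by simp [hm.ne htj, (adj_apply_of_range_eq hr j).ne]⟩

end Ports

abbrev ModVert (v : V) (d : ℕ) : Type _ := {w : V // w ≠ v} ⊕ ZMod d

def cycleOn (d : ℕ) : SimpleGraph (ZMod d) :=
  SimpleGraph.fromRel fun i j => j = i + 1

section LocalCubicMod

variable {G : SimpleGraph V} {v : V} {d : ℕ} {m : ZMod d → V}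

@[simp]
lemma localCubicMod_adj_inl_inl {a b : {w : V // w ≠ v}} :
    (localCubicMod G v d m).Adj (.inl a) (.inl b) ↔ G.Adj a b := by
  simp only [localCubicMod, SimpleGraph.fromRel_adj, lcmRel, ne_eq, Sum.inl.injEq]
  exact ⟨fun h => h.2.elim id .symm, fun h => ⟨fun hab => G.irrefl (hab ▸ h), .inl h⟩⟩

@[simp]
lemma localCubicMod_adj_inl_inr {a : {w : V // w ≠ v}} {j : ZMod d} :
    (localCubicMod G v d m).Adj (.inl a) (.inr j) ↔ a.1 = m j := by
  simp [localCubicMod, lcmRel]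

@[simp]
lemma localCubicMod_adj_inr_inl {a : {w : V // w ≠ v}} {j : ZMod d} :
    (localCubicMod G v d m).Adj (.inr j) (.inl a) ↔ a.1 = m j := by
  simp [localCubicMod, lcmRel]

@[simp]
lemma localCubicMod_adj_inr_inr {i j : ZMod d} :
    (localCubicMod G v d m).Adj (.inr i) (.inr j) ↔ (cycleOn d).Adj i j := by
  simp [localCubicMod, lcmRel, cycleOn]

end LocalCubicMod

section Contraction

variable {G : SimpleGraph V} {v : V} {d : ℕ} {m : ZMod d → V}

def collapse (v : V) : ModVert v d → V :=
  Sum.elim Subtype.val fun _ => v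

@[simp] lemma collapse_inl (a : {w : V // w ≠ v}) : collapse (d := d) v (.inl a) = a := rfl

@[simp] lemma collapse_inr (j : ZMod d) : collapse v (.inr j) = v := rfl

lemma collapse_surjective : (collapse (d := d) v).Surjective := fun a => by
  by_cases ha : a = v
  · exact ⟨.inr 0, ha.symm⟩
  · exact ⟨.inl ⟨a, ha⟩, rfl⟩

lemma adj_collapse (hr : Set.range m = G.neighborSet v) {x y : ModVert v d}
    (hxy : (localCubicMod G v d m).Adj x y) (hne : collapse v x ≠ collapse v y) :
    G.Adj (collapse v x) (collapse v y) := by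
  rcases x with a | i <;> rcases y with b | j <;>
    simp_all [adj_apply_of_range_eq hr, G.adj_comm]

lemma exists_adj_collapse (hr : Set.range m = G.neighborSet v) {a b : V} (hab : G.Adj a b) :
    ∃ x y, (localCubicMod G v d m).Adj x y ∧ collapse v x = a ∧ collapse v y = b := by
  by_cases ha : a = v
  · subst ha
    obtain ⟨j, rfl⟩ := exists_apply_eq_of_adj hr hab
    exact ⟨.inr j, .inl ⟨m j, hab.ne'⟩, by simp, rfl, rfl⟩
  by_cases hb : b = v
  · subst hb
    obtain ⟨j, rfl⟩ := exists_apply_eq_of_adj hr hab.symm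
    exact ⟨.inl ⟨m j, ha⟩, .inr j, by simp, rfl, rfl⟩
  exact ⟨.inl ⟨a, ha⟩, .inl ⟨b, hb⟩, by simpa using hab, rfl, rfl⟩

lemma eq_of_adj_collapse (hm : m.Injective) {x y x' y' : ModVert v d}
    (hxy : (localCubicMod G v d m).Adj x y) (hxy' : (localCubicMod G v d m).Adj x' y')
    (hx : collapse v x = collapse v x') (hy : collapse v y = collapse v y')
    (hne : collapse v x ≠ collapse v y) : x = x' ∧ y = y' := by
  rcases x with ⟨a, ha⟩ | i <;> rcases y with ⟨b, hb⟩ | j <;>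
    rcases x' with ⟨a', ha'⟩ | i' <;> rcases y' with ⟨b', hb'⟩ | j' <;>
    simp only [collapse_inl, collapse_inr, localCubicMod_adj_inl_inr, localCubicMod_adj_inr_inl,
      Sum.inl.injEq, Sum.inr.injEq, Subtype.mk.injEq, reduceCtorEq] at * <;>
    grind [hm.eq_iff]

def contractRel (v : V) (R : ModVert v d → ModVert v d → Prop) : V → V → Prop :=
  fun a b => a ≠ b ∧ Relation.Map R (collapse v) (collapse v) a b

lemma IsStrong.contractRel {R : ModVert v d → ModVert v d → Prop} (hR : IsStrong R) :
    IsStrong (contractRel v R) := by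
  refine hR.of_surjective collapse_surjective fun x y hxy => ?_
  by_cases h : collapse v x = collapse v y
  · rw [h]
  · exact .single ⟨h, x, y, hxy, rfl, rfl⟩

def Orient.contract (hm : m.Injective) (hr : Set.range m = G.neighborSet v)
    (P : Orient (localCubicMod G v d m)) : Orient G where
  dir := contractRel v P.dir
  dir_iff a b := by
    refine ⟨?_, fun hab => ?_⟩
    · rintro (⟨hne, x, y, hxy, rfl, rfl⟩ | ⟨hne, y, x, hyx, rfl, rfl⟩)
      · exact adj_collapse hr (P.adj_of_dir hxy) hne
      · exact (adj_collapse hr (P.adj_of_dir hyx) hne).symm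
    · obtain ⟨x, y, hxy, rfl, rfl⟩ := exists_adj_collapse hr hab
      rcases (P.dir_iff x y).2 hxy with h | h
      · exact .inl ⟨hab.ne, x, y, h, rfl, rfl⟩
      · exact .inr ⟨hab.ne.symm, y, x, h, rfl, rfl⟩
  not_both := by
    rintro _ _ ⟨hne, x, y, hxy, rfl, rfl⟩ ⟨-, y', x', hyx', hy, hx⟩
    obtain ⟨rfl, rfl⟩ := eq_of_adj_collapse hm (P.adj_of_dir hxy) (P.adj_of_dir hyx').symm
      hx.symm hy.symm hne
    exact P.not_both _ _ hxy hyx'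

lemma contractRel_delEdge_le (hm : m.Injective) {R : ModVert v d → ModVert v d → Prop}
    (hR : ∀ x y, R x y → (localCubicMod G v d m).Adj x y) {x y : ModVert v d}
    (hxy : (localCubicMod G v d m).Adj x y) (hne : collapse v x ≠ collapse v y) :
    contractRel v (delEdge R x y) ≤ delEdge (contractRel v R) (collapse v x) (collapse v y) := by
  rintro _ _ ⟨hab, x', y', ⟨hR', hdel⟩, rfl, rfl⟩
  refine ⟨⟨hab, x', y', hR', rfl, rfl⟩, ?_⟩
  rintro (⟨hx, hy⟩ | ⟨hx, hy⟩)
  · obtain ⟨rfl, rfl⟩ := eq_of_adj_collapse hm hxy (hR _ _ hR') hx.symm hy.symm hne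
    exact hdel (.inl ⟨rfl, rfl⟩)
  · obtain ⟨rfl, rfl⟩ :=
      eq_of_adj_collapse hm hxy.symm (hR _ _ hR') hx.symm hy.symm (Ne.symm hne)
    exact hdel (.inr ⟨rfl, rfl⟩)

theorem AdmitsFrankFamily.of_localCubicMod (hm : m.Injective)
    (hr : Set.range m = G.neighborSet v) {k : ℕ}
    (h : AdmitsFrankFamily (localCubicMod G v d m) k) : AdmitsFrankFamily G k := by
  obtain ⟨Ps, hstrong, hcov⟩ := h
  refine ⟨fun i => (Ps i).contract hm hr, fun i => (hstrong i).contractRel, fun a b hab => ?_⟩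
  obtain ⟨x, y, hxy, rfl, rfl⟩ := exists_adj_collapse hr hab
  obtain ⟨i, hi⟩ := hcov x y hxy
  exact ⟨i, hi.contractRel.mono
    (contractRel_delEdge_le hm (fun _ _ => (Ps i).adj_of_dir) hxy hab.ne)⟩

end Contraction

section Extension

variable {G : SimpleGraph V} {v : V} {d : ℕ} {m : ZMod d → V}

def extendRel (v : V) (m : ZMod d → V) (r : V → V → Prop) (t : ZMod d → ZMod d → Prop) :
    ModVert v d → ModVert v d → Prop
  | .inl a, .inl b => r a b
  | .inl a, .inr j => a.1 = m j ∧ r a v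
  | .inr j, .inl a => a.1 = m j ∧ r v a
  | .inr i, .inr j => t i j

structure RoutesPorts (v : V) (m : ZMod d → V) (r : V → V → Prop)
    (t : ZMod d → ZMod d → Prop) : Prop where
  in_out : ∀ i j, r (m i) v → r v (m j) → ReflTransGen t i j
  from_in : ∀ j, ∃ i, r (m i) v ∧ ReflTransGen t i j
  to_out : ∀ i, ∃ j, r v (m j) ∧ ReflTransGen t i j

variable {r : V → V → Prop} {t : ZMod d → ZMod d → Prop}

lemma RoutesPorts.of_isStrong (hin : ∃ i, r (m i) v) (hout : ∃ j, r v (m j))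
    (ht : IsStrong t) : RoutesPorts v m r t :=
  ⟨fun i j _ _ => ht i j, fun j => hin.imp fun _ hi => ⟨hi, ht _ j⟩,
    fun i => hout.imp fun _ hj => ⟨hj, ht i _⟩⟩

lemma RoutesPorts.delEdge_of_ne (h : RoutesPorts v m r t) {a b : V} (ha : a ≠ v) (hb : b ≠ v) :
    RoutesPorts v m (delEdge r a b) t := by
  have hin : ∀ x, delEdge r a b x v ↔ r x v := fun x => by simp [delEdge, hb.symm, ha.symm]
  have hout : ∀ x, delEdge r a b v x ↔ r v x := fun x => by simp [delEdge, ha.symm, hb.symm]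
  refine ⟨fun i j hi hj => h.in_out i j ((hin _).1 hi) ((hout _).1 hj), fun j => ?_,
    fun i => ?_⟩
  · obtain ⟨i, hi, hij⟩ := h.from_in j
    exact ⟨i, (hin _).2 hi, hij⟩
  · obtain ⟨j, hj, hij⟩ := h.to_out i
    exact ⟨j, (hout _).2 hj, hij⟩

lemma reflTransGen_extendRel_inl (hr : Set.range m = G.neighborSet v)
    (hadj : ∀ a b, r a b → G.Adj a b) (h : RoutesPorts v m r t) (u : {w : V // w ≠ v}) {c : V}
    (huc : ReflTransGen r u c) :
    (∀ hc : c ≠ v, ReflTransGen (extendRel v m r t) (.inl u) (.inl ⟨c, hc⟩)) ∧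
    (c = v → ∀ j, r v (m j) → ReflTransGen (extendRel v m r t) (.inl u) (.inr j)) := by
  induction huc with
  | refl => exact ⟨fun _ => .refl, fun hu => absurd hu u.2⟩
  | @tail b c _ hbc ih =>
    refine ⟨fun hc => ?_, fun hcv j hj => ?_⟩
    · by_cases hb : b = v
      · rw [hb] at hbc ih
        obtain ⟨j, rfl⟩ := exists_apply_eq_of_adj hr (hadj _ _ hbc)
        have hport : extendRel v m r t (.inr j) (.inl ⟨m j, hc⟩) := ⟨rfl, hbc⟩
        exact (ih.2 rfl j hbc).tail hport
      · have hstep : extendRel v m r t (.inl ⟨b, hb⟩) (.inl ⟨c, hc⟩) := hbc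
        exact (ih.1 hb).tail hstep
    · rw [hcv] at hbc
      have hb : b ≠ v := (hadj _ _ hbc).ne
      obtain ⟨i, rfl⟩ := exists_apply_eq_of_adj hr (hadj _ _ hbc).symm
      have hport : extendRel v m r t (.inl ⟨m i, hb⟩) (.inr i) := ⟨rfl, hbc⟩
      exact ((ih.1 hb).tail hport).trans ((h.in_out i j hbc hj).lift Sum.inr fun _ _ h => h)

lemma isStrong_extendRel (hr : Set.range m = G.neighborSet v)
    (hadj : ∀ a b, r a b → G.Adj a b) (hs : IsStrong r) (h : RoutesPorts v m r t) :
    IsStrong (extendRel v m r t) := by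
  have lift_t : ∀ {i j}, ReflTransGen t i j →
      ReflTransGen (extendRel v m r t) (.inr i) (.inr j) :=
    fun hij => hij.lift Sum.inr fun _ _ h => h
  have inl_inl : ∀ a b, ReflTransGen (extendRel v m r t) (.inl a) (.inl b) :=
    fun a b => (reflTransGen_extendRel_inl hr hadj h a (hs a b)).1 b.2
  have inl_inr : ∀ a j, ReflTransGen (extendRel v m r t) (.inl a) (.inr j) := fun a j => by
    obtain ⟨i, hi, hij⟩ := h.from_in j
    have hport : extendRel v m r t (.inl ⟨m i, (adj_apply_of_range_eq hr i).ne'⟩) (.inr i) :=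
      ⟨rfl, hi⟩
    exact ((inl_inl a _).tail hport).trans (lift_t hij)
  have inr_inl : ∀ i b, ReflTransGen (extendRel v m r t) (.inr i) (.inl b) := fun i b => by
    obtain ⟨j, hj, hij⟩ := h.to_out i
    have hport : extendRel v m r t (.inr j) (.inl ⟨m j, (adj_apply_of_range_eq hr j).ne'⟩) :=
      ⟨rfl, hj⟩
    exact ((lift_t hij).tail hport).trans (inl_inl _ b)
  rintro (a | i) (b | j)
  · exact inl_inl a b
  · exact inl_inr a j
  · exact inr_inl i b
  · exact (inr_inl i ⟨m 0, (adj_apply_of_range_eq hr 0).ne'⟩).trans (inl_inr _ j)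

lemma extendRel_delEdge_inl_le (a b : {w : V // w ≠ v}) :
    extendRel v m (delEdge r a b) t ≤ delEdge (extendRel v m r t) (.inl a) (.inl b) := by
  rintro (x | i) (y | j) <;> simp +contextual [extendRel, delEdge, Subtype.ext_iff]

lemma extendRel_delEdge_pendant_le (hm : m.Injective) {a : {w : V // w ≠ v}} {j : ZMod d}
    (haj : a.1 = m j) :
    extendRel v m (delEdge r (m j) v) t ≤ delEdge (extendRel v m r t) (.inl a) (.inr j) := by
  rintro (x | i) (y | j) <;>
    simp +contextual [extendRel, delEdge, Subtype.ext_iff, haj, hm.eq_iff]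

lemma extendRel_delEdge_inr_le (p q : ZMod d) :
    extendRel v m r (delEdge t p q) ≤ delEdge (extendRel v m r t) (.inr p) (.inr q) := by
  rintro (x | i) (y | j) <;> simp [extendRel, delEdge]

def Orient.extend (hr : Set.range m = G.neighborSet v) (O : Orient G) (T : Orient (cycleOn d)) :
    Orient (localCubicMod G v d m) where
  dir := extendRel v m O.dir T.dir
  dir_iff x y := by
    rcases x with a | i <;> rcases y with b | j
    · exact O.dir_iff a b |>.trans localCubicMod_adj_inl_inl.symm
    · show (a.1 = m j ∧ O.dir a v) ∨ (a.1 = m j ∧ O.dir v a) ↔ _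
      rw [localCubicMod_adj_inl_inr, ← and_or_left, O.dir_iff]
      exact and_iff_left_of_imp fun h => by rw [h]; exact (adj_apply_of_range_eq hr j).symm
    · show (b.1 = m i ∧ O.dir v b) ∨ (b.1 = m i ∧ O.dir b v) ↔ _
      rw [localCubicMod_adj_inr_inl, ← and_or_left, or_comm, O.dir_iff]
      exact and_iff_left_of_imp fun h => by rw [h]; exact (adj_apply_of_range_eq hr i).symm
    · exact T.dir_iff i j |>.trans localCubicMod_adj_inr_inr.symm
  not_both x y := by
    rcases x with a | i <;> rcases y with b | j
    · exact O.not_both a b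
    · exact fun h h' => O.not_both _ _ h.2 h'.2
    · exact fun h h' => O.not_both _ _ h.2 h'.2
    · exact T.not_both i j

structure RoutingFamily (v : V) (m : ZMod d → V) {k : ℕ} (Os : Fin k → Orient G)
    (T : Fin k → Orient (cycleOn d)) : Prop where
  routes : ∀ i, RoutesPorts v m (Os i).dir (T i).dir
  pendant : ∀ j, ∃ i, EdgeDeletable (Os i) (m j) v ∧
    RoutesPorts v m (delEdge (Os i).dir (m j) v) (T i).dir
  cycle : ∀ p q, (cycleOn d).Adj p q → ∃ i, RoutesPorts v m (Os i).dir (delEdge (T i).dir p q)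

theorem AdmitsFrankFamily.localCubicMod_of_routingFamily (hm : m.Injective)
    (hr : Set.range m = G.neighborSet v) {k : ℕ} {Os : Fin k → Orient G}
    (hstrong : ∀ i, IsStrong (Os i).dir)
    (hcov : ∀ a b, G.Adj a b → ∃ i, EdgeDeletable (Os i) a b)
    {T : Fin k → Orient (cycleOn d)} (hT : RoutingFamily v m Os T) :
    AdmitsFrankFamily (localCubicMod G v d m) k := by
  have hadj : ∀ i a b, (Os i).dir a b → G.Adj a b := fun i _ _ => (Os i).adj_of_dir
  have hadj_del : ∀ i a b x y, delEdge (Os i).dir a b x y → G.Adj x y :=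
    fun i _ _ _ _ h => (Os i).adj_of_dir h.1
  refine ⟨fun i => (Os i).extend hr (T i),
    fun i => isStrong_extendRel hr (hadj i) (hstrong i) (hT.routes i), ?_⟩
  have pendant : ∀ a j, a.1 = m j →
      ∃ i, EdgeDeletable ((Os i).extend hr (T i)) (.inl a) (.inr j) := fun a j haj => by
    obtain ⟨i, hi, hroutes⟩ := hT.pendant j
    exact ⟨i, (isStrong_extendRel hr (hadj_del i _ _) hi hroutes).mono
      (extendRel_delEdge_pendant_le hm haj)⟩
  rintro (a | i) (b | j) hxy
  · obtain ⟨i, hi⟩ := hcov a b (localCubicMod_adj_inl_inl.1 hxy)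
    exact ⟨i, (isStrong_extendRel hr (hadj_del i _ _) hi
      ((hT.routes i).delEdge_of_ne a.2 b.2)).mono (extendRel_delEdge_inl_le a b)⟩
  · exact pendant a j (localCubicMod_adj_inl_inr.1 hxy)
  · obtain ⟨i', hi'⟩ := pendant b i (localCubicMod_adj_inr_inl.1 hxy)
    exact ⟨i', hi'.symm⟩
  · obtain ⟨i', hi'⟩ := hT.cycle i j (localCubicMod_adj_inr_inr.1 hxy)
    exact ⟨i', (isStrong_extendRel hr (hadj i') (hstrong i') hi').mono
      (extendRel_delEdge_inr_le i j)⟩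

end Extension

namespace ZMod3

lemma eq_or_eq_or_eq {x y z : ZMod 3} (hxy : x ≠ y) (hxz : x ≠ z) (hyz : y ≠ z) (j : ZMod 3) :
    j = x ∨ j = y ∨ j = z := by
  revert x y z j; decide

lemma eq_add_one_or_eq_add_two {x j : ZMod 3} (h : x ≠ j) : x = j + 1 ∨ x = j + 2 := by
  revert x j; decide

lemma exists_ne_ne (s t : ZMod 3) : ∃ w, w ≠ s ∧ w ≠ t := by
  revert s t; decide

lemma add_one_ne (j : ZMod 3) : j + 1 ≠ j := by revert j; decide

lemma add_two_ne (j : ZMod 3) : j + 2 ≠ j := by revert j; decide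

lemma add_one_ne_add_two (j : ZMod 3) : j + 1 ≠ j + 2 := by revert j; decide

lemma add_one_add_two (j : ZMod 3) : j + 1 + 2 = j := by revert j; decide

lemma add_two_add_one (j : ZMod 3) : j + 2 + 1 = j := by revert j; decide

lemma add_two_add_two (j : ZMod 3) : j + 2 + 2 = j + 1 := by revert j; decide

lemma exists_sym2_eq {p q : ZMod 3} (hpq : p ≠ q) : ∃ j, s(p, q) = s(j + 1, j + 2) := by
  revert p q; decide

lemma sym2_cases {s t j p q : ZMod 3} (hst : s ≠ t) (hsj : s ≠ j) (htj : t ≠ j)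
    (hpq : p ≠ q) :
    s(p, q) = s(s, t) ∨ s(p, q) = s(s, j) ∨ s(p, q) = s(j, t) := by
  revert s t j p q; decide

lemma injective_or_exists_or_forall {β : Type*} (c : ZMod 3 → β) :
    c.Injective ∨ (∃ j, c (j + 1) = c (j + 2) ∧ c j ≠ c (j + 1)) ∨ ∀ j, c j = c 0 := by
  by_cases h01 : c 0 = c 1
  · by_cases h02 : c 0 = c 2
    · refine .inr (.inr fun j => ?_)
      fin_cases j
      exacts [rfl, h01.symm, h02.symm]
    · exact .inr (.inl ⟨2, h01, Ne.symm h02⟩)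
  · by_cases h02 : c 0 = c 2
    · exact .inr (.inl ⟨1, h02.symm, fun h12 => h01 (h02.trans h12.symm)⟩)
    · by_cases h12 : c 1 = c 2
      · exact .inr (.inl ⟨0, h12, h01⟩)
      · refine .inl fun x y hxy => ?_
        fin_cases x <;> fin_cases y <;>
          first | rfl | exact absurd hxy ‹_› | exact absurd hxy.symm ‹_›

end ZMod3

section Triangle

lemma cycleOn_three_adj {i j : ZMod 3} : (cycleOn 3).Adj i j ↔ i ≠ j := by
  simp only [cycleOn, SimpleGraph.fromRel_adj]
  revert i j; decide

def cycOrient (b : Bool) : Orient (cycleOn 3) where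
  dir i j := if b then j = i + 1 else i = j + 1
  dir_iff i j := by rw [cycleOn_three_adj]; revert i j; cases b <;> decide
  not_both i j := by revert i j; cases b <;> decide

def transOrient (s t : ZMod 3) (hst : s ≠ t) : Orient (cycleOn 3) where
  dir i j := (i = s ∨ j = t) ∧ i ≠ t ∧ j ≠ s
  dir_iff i j := by rw [cycleOn_three_adj]; revert s t i j; decide
  not_both i j := by rintro ⟨-, hit, hjs⟩ ⟨hjt | his, -, -⟩ <;> contradiction

lemma isStrong_cycOrient (b : Bool) : IsStrong (cycOrient b).dir := by
  have h : ∀ i j : ZMod 3, i = j ∨ (cycOrient b).dir i j ∨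
      ∃ k, (cycOrient b).dir i k ∧ (cycOrient b).dir k j := by
    simp only [cycOrient]; cases b <;> decide
  intro i j
  rcases h i j with rfl | hij | ⟨k, hik, hkj⟩
  exacts [.refl, .single hij, (ReflTransGen.single hik).tail hkj]

lemma exists_cycOrient_delEdge_path {x y : ZMod 3} (hxy : x ≠ y) :
    ∃ b z, x ≠ z ∧ z ≠ y ∧
      delEdge (cycOrient b).dir x y x z ∧ delEdge (cycOrient b).dir x y z y := by
  simp only [delEdge, cycOrient]; revert x y; decide

variable {G : SimpleGraph V} {v : V} {m : ZMod 3 → V} {r : V → V → Prop}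

lemma RoutesPorts.of_path {t : ZMod 3 → ZMod 3 → Prop} (hasymm : ∀ a b, r a b → ¬ r b a)
    {x y z : ZMod 3} (hxy : x ≠ y) (hxz : x ≠ z) (hyz : y ≠ z) (hx : r (m x) v)
    (hz : r v (m z)) (htxy : t x y) (htyz : t y z) : RoutesPorts v m r t := by
  have hall := ZMod3.eq_or_eq_or_eq hxy hxz hyz
  have from_x : ∀ j, ReflTransGen t x j := fun j => by
    rcases hall j with rfl | rfl | rfl
    exacts [.refl, .single htxy, (ReflTransGen.single htxy).tail htyz]
  have to_z : ∀ i, ReflTransGen t i z := fun i => by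
    rcases hall i with rfl | rfl | rfl
    exacts [(ReflTransGen.single htxy).tail htyz, .single htyz, .refl]
  refine ⟨fun i j hi hj => ?_, fun j => ⟨x, hx, from_x j⟩, fun i => ⟨z, hz, to_z i⟩⟩
  rcases hall i with rfl | rfl | rfl
  · exact from_x j
  · rcases hall j with rfl | rfl | rfl
    exacts [absurd hj (hasymm _ _ hx), .refl, .single htyz]
  · exact absurd hi (hasymm _ _ hz)

lemma RoutesPorts.of_sink {t : ZMod 3 → ZMod 3 → Prop} (hasymm : ∀ a b, r a b → ¬ r b a)
    {z : ZMod 3} (hz : r v (m z)) (hin : ∀ j ≠ z, r (m j) v) (ht : ∀ j ≠ z, t j z) :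
    RoutesPorts v m r t := by
  have to_z : ∀ i, ReflTransGen t i z := fun i => by
    by_cases hi : i = z
    exacts [hi ▸ .refl, .single (ht i hi)]
  refine ⟨fun i j _ hj => ?_, fun j => ?_, fun i => ⟨z, hz, to_z i⟩⟩
  · by_cases hjz : j = z
    exacts [hjz ▸ to_z i, absurd hj (hasymm _ _ (hin j hjz))]
  · by_cases hjz : j = z
    · rw [hjz]
      exact ⟨z + 1, hin _ (ZMod3.add_one_ne z), .single (ht _ (ZMod3.add_one_ne z))⟩
    · exact ⟨j, hin j hjz, .refl⟩

lemma RoutesPorts.of_source {t : ZMod 3 → ZMod 3 → Prop} (hasymm : ∀ a b, r a b → ¬ r b a)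
    {x : ZMod 3} (hx : r (m x) v) (hout : ∀ j ≠ x, r v (m j)) (ht : ∀ j ≠ x, t x j) :
    RoutesPorts v m r t := by
  have from_x : ∀ j, ReflTransGen t x j := fun j => by
    by_cases hj : j = x
    exacts [hj ▸ .refl, .single (ht j hj)]
  refine ⟨fun i j hi _ => ?_, fun j => ⟨x, hx, from_x j⟩, fun i => ?_⟩
  · by_cases hix : i = x
    exacts [hix ▸ from_x j, absurd hi (hasymm _ _ (hout i hix))]
  · by_cases hix : i = x
    · rw [hix]
      exact ⟨x + 1, hout _ (ZMod3.add_one_ne x), .single (ht _ (ZMod3.add_one_ne x))⟩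
    · exact ⟨i, hout i hix, .refl⟩

lemma routesPorts_cycOrient (hr : Set.range m = G.neighborSet v)
    (hadj : ∀ a b, r a b → G.Adj a b) (hs : IsStrong r) (b : Bool) :
    RoutesPorts v m r (cycOrient b).dir :=
  .of_isStrong (exists_in_port hr hadj hs) (exists_out_port hr hadj hs) (isStrong_cycOrient b)

lemma exists_routesPorts_cycOrient_delEdge (hasymm : ∀ a b, r a b → ¬ r b a) {x y : ZMod 3}
    (hxy : x ≠ y) (hx : r (m x) v) (hy : r v (m y)) :
    ∃ b, RoutesPorts v m r (delEdge (cycOrient b).dir x y) := by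
  obtain ⟨b, z, hxz, hzy, hxz', hzy'⟩ := exists_cycOrient_delEdge_path hxy
  exact ⟨b, .of_path hasymm hxz hxy hzy hx hy hxz' hzy'⟩

section Transitive

variable {s t : ZMod 3} (hst : s ≠ t)

lemma routesPorts_transOrient (hasymm : ∀ a b, r a b → ¬ r b a) (hs : r (m s) v)
    (ht : r v (m t)) : RoutesPorts v m r (transOrient s t hst).dir := by
  obtain ⟨w, hws, hwt⟩ := ZMod3.exists_ne_ne s t
  exact .of_path hasymm (Ne.symm hws) hst hwt hs ht ⟨.inl rfl, hst, hws⟩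
    ⟨.inr rfl, hwt, hst.symm⟩

lemma routesPorts_transOrient_delEdge (hasymm : ∀ a b, r a b → ¬ r b a) (hs : r (m s) v)
    (ht : r v (m t)) : RoutesPorts v m r (delEdge (transOrient s t hst).dir s t) := by
  obtain ⟨w, hws, hwt⟩ := ZMod3.exists_ne_ne s t
  refine .of_path hasymm (Ne.symm hws) hst hwt hs ht ⟨⟨.inl rfl, hst, hws⟩, ?_⟩
    ⟨⟨.inr rfl, hwt, hst.symm⟩, ?_⟩ <;> simp [hwt, hws, hst]

lemma routesPorts_transOrient_delEdge_sink (hasymm : ∀ a b, r a b → ¬ r b a) {w : ZMod 3}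
    (hws : w ≠ s) (hwt : w ≠ t) (hs : r (m s) v) (hw : r (m w) v) (ht : r v (m t)) :
    RoutesPorts v m r (delEdge (transOrient s t hst).dir s w) := by
  refine .of_sink hasymm ht (fun j hj => ?_) fun j hj => ⟨⟨.inr rfl, hj, hst.symm⟩, ?_⟩
  · rcases ZMod3.eq_or_eq_or_eq (Ne.symm hws) hst hwt j with rfl | rfl | rfl
    exacts [hs, hw, absurd rfl hj]
  · simp [hst.symm, hwt.symm]

lemma routesPorts_transOrient_delEdge_source (hasymm : ∀ a b, r a b → ¬ r b a) {w : ZMod 3}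
    (hws : w ≠ s) (hwt : w ≠ t) (hs : r (m s) v) (hw : r v (m w)) (ht : r v (m t)) :
    RoutesPorts v m r (delEdge (transOrient s t hst).dir w t) := by
  refine .of_source hasymm hs (fun j hj => ?_) fun j hj => ⟨⟨.inl rfl, hst, hj⟩, ?_⟩
  · rcases ZMod3.eq_or_eq_or_eq (Ne.symm hws) hst hwt j with rfl | rfl | rfl
    exacts [absurd rfl hj, hw, ht]
  · simp [hst, hws.symm]

end Transitive

end Triangle

section Combinatorics

variable {G : SimpleGraph V} {v : V} {m : ZMod 3 → V}

lemma Orient.in_iff_not_in_of_edgeDeletable (hr : Set.range m = G.neighborSet v) (O : Orient G)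
    {j : ZMod 3} (hj : EdgeDeletable O (m j) v) :
    O.dir (m (j + 1)) v ↔ ¬ O.dir (m (j + 2)) v := by
  obtain ⟨s, t, hsj, htj, hst, hs, ht⟩ := O.exists_ports_of_edgeDeletable hr hj
  have ht' := (O.out_iff_not_in hr t).1 ht
  rcases ZMod3.eq_add_one_or_eq_add_two hsj with rfl | rfl <;>
    rcases ZMod3.eq_add_one_or_eq_add_two htj with rfl | rfl
  · exact absurd rfl hst
  · exact iff_of_true hs ht'
  · exact iff_of_false ht' (not_not_intro hs)
  · exact absurd rfl hst

lemma Orient.not_forall_edgeDeletable (hr : Set.range m = G.neighborSet v) (O : Orient G) :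
    ¬ ∀ j : ZMod 3, EdgeDeletable O (m j) v := by
  intro h
  have h0 : O.dir (m 1) v ↔ ¬ O.dir (m 2) v := O.in_iff_not_in_of_edgeDeletable hr (h 0)
  have h1 : O.dir (m 2) v ↔ ¬ O.dir (m 0) v := O.in_iff_not_in_of_edgeDeletable hr (h 1)
  have h2 : O.dir (m 0) v ↔ ¬ O.dir (m 1) v := O.in_iff_not_in_of_edgeDeletable hr (h 2)
  tauto

lemma Orient.in_iff_not_in_of_two_edgeDeletable (hr : Set.range m = G.neighborSet v)
    (O : Orient G) {j : ZMod 3} (h1 : EdgeDeletable O (m (j + 1)) v)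
    (h2 : EdgeDeletable O (m (j + 2)) v) {x : ZMod 3} (hx : x ≠ j) :
    O.dir (m x) v ↔ ¬ O.dir (m j) v := by
  have e1 := O.in_iff_not_in_of_edgeDeletable hr h1
  have e2 := O.in_iff_not_in_of_edgeDeletable hr h2
  rw [show j + 1 + 1 = j + 2 by ring, ZMod3.add_one_add_two] at e1
  rw [ZMod3.add_two_add_one, ZMod3.add_two_add_two] at e2
  rcases ZMod3.eq_add_one_or_eq_add_two hx with rfl | rfl <;> tauto

lemma exists_routesPorts_cycOrient_delEdge_of_iff (hr : Set.range m = G.neighborSet v)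
    (O : Orient G) {x y : ZMod 3} (hxy : x ≠ y) (h : O.dir (m x) v ↔ ¬ O.dir (m y) v) :
    ∃ b, RoutesPorts v m O.dir (delEdge (cycOrient b).dir x y) := by
  by_cases hx : O.dir (m x) v
  · exact exists_routesPorts_cycOrient_delEdge O.not_both hxy hx
      ((O.out_iff_not_in hr y).2 (h.1 hx))
  · obtain ⟨b, hb⟩ := exists_routesPorts_cycOrient_delEdge O.not_both hxy.symm
      (not_not.1 (mt h.2 hx)) ((O.out_iff_not_in hr x).2 hx)
    exact ⟨b, by rwa [delEdge_comm]⟩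

/-- Which of the two edges at `j` the transitive orientation covers depends on the direction of
the port `m j` in `O`. -/
lemma exists_cycOrient_covering_middle_edges (hr : Set.range m = G.neighborSet v)
    (O P : Orient G) {s t j : ZMod 3} (hst : s ≠ t) (hsj : s ≠ j) (htj : t ≠ j)
    (hs : O.dir (m s) v) (ht : O.dir v (m t))
    (hP : ∀ x ≠ j, P.dir (m x) v ↔ ¬ P.dir (m j) v) : ∃ b,
      (RoutesPorts v m O.dir (delEdge (transOrient s t hst).dir s j) ∧
        RoutesPorts v m P.dir (delEdge (cycOrient b).dir j t)) ∨
      (RoutesPorts v m O.dir (delEdge (transOrient s t hst).dir j t) ∧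
        RoutesPorts v m P.dir (delEdge (cycOrient b).dir s j)) := by
  by_cases hj : O.dir (m j) v
  · obtain ⟨b, hb⟩ := exists_routesPorts_cycOrient_delEdge_of_iff hr P htj.symm
      (by have := hP t htj; tauto)
    exact ⟨b, .inl ⟨routesPorts_transOrient_delEdge_sink hst O.not_both hsj.symm htj.symm
      hs hj ht, hb⟩⟩
  · obtain ⟨b, hb⟩ := exists_routesPorts_cycOrient_delEdge_of_iff hr P hsj (hP s hsj)
    exact ⟨b, .inr ⟨routesPorts_transOrient_delEdge_source hst O.not_both hsj.symm htj.symm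
      hs ((O.out_iff_not_in hr j).2 hj) ht, hb⟩⟩

variable {k : ℕ} {Os : Fin k → Orient G} {c : ZMod 3 → Fin k}

lemma exists_routingFamily_of_injective (hr : Set.range m = G.neighborSet v)
    (hstrong : ∀ i, IsStrong (Os i).dir) (hc : ∀ j, EdgeDeletable (Os (c j)) (m j) v)
    (hinj : c.Injective) : ∃ T, RoutingFamily v m Os T := by
  choose b hb using fun j => exists_routesPorts_cycOrient_delEdge_of_iff hr (Os (c j))
    (ZMod3.add_one_ne_add_two j) ((Os (c j)).in_iff_not_in_of_edgeDeletable hr (hc j))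
  refine ⟨fun i => cycOrient (Function.extend c b (fun _ => true) i),
    ⟨fun i => routesPorts_cycOrient hr (fun _ _ => (Os i).adj_of_dir) (hstrong i) _,
    fun j => ⟨c j, hc j,
      routesPorts_cycOrient hr (fun _ _ h => (Os (c j)).adj_of_dir h.1) (hc j) _⟩,
    fun p q hpq => ?_⟩⟩
  obtain ⟨j, hj⟩ := ZMod3.exists_sym2_eq (cycleOn_three_adj.1 hpq)
  refine ⟨c j, ?_⟩
  rw [hinj.extend_apply, delEdge_congr_sym2 _ hj]
  exact hb j

lemma exists_routingFamily_of_eq_of_ne (hm : m.Injective) (hr : Set.range m = G.neighborSet v)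
    (hstrong : ∀ i, IsStrong (Os i).dir) (hc : ∀ j, EdgeDeletable (Os (c j)) (m j) v)
    {j : ZMod 3} (heq : c (j + 1) = c (j + 2)) (hne : c j ≠ c (j + 1)) :
    ∃ T, RoutingFamily v m Os T := by
  have hP : ∀ x ≠ j, EdgeDeletable (Os (c (j + 1))) (m x) v := fun x hx => by
    rcases ZMod3.eq_add_one_or_eq_add_two hx with rfl | rfl
    exacts [hc _, heq ▸ hc _]
  obtain ⟨s, t, hsj, htj, hst, hs, ht⟩ := (Os (c j)).exists_ports_of_edgeDeletable hr (hc j)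
  obtain ⟨b, hcover⟩ := exists_cycOrient_covering_middle_edges hr (Os (c j)) (Os (c (j + 1)))
    hst hsj htj hs ht fun x hx => (Os (c (j + 1))).in_iff_not_in_of_two_edgeDeletable hr
      (hP _ (ZMod3.add_one_ne j)) (hP _ (ZMod3.add_two_ne j)) hx
  have hT_c : Function.update (fun _ => cycOrient b) (c j) (transOrient s t hst) (c j) =
      transOrient s t hst := Function.update_self ..
  have hT_ne : ∀ i ≠ c j,
      Function.update (fun _ => cycOrient b) (c j) (transOrient s t hst) i = cycOrient b :=
    fun i hi => Function.update_of_ne hi ..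
  refine ⟨Function.update (fun _ => cycOrient b) (c j) (transOrient s t hst),
    ⟨fun i => ?_, fun x => ?_, fun p q hpq => ?_⟩⟩
  · by_cases hi : i = c j
    · rw [hi, hT_c]
      exact routesPorts_transOrient hst (Os (c j)).not_both hs ht
    · rw [hT_ne i hi]
      exact routesPorts_cycOrient hr (fun _ _ => (Os i).adj_of_dir) (hstrong i) b
  · by_cases hx : x = j
    · refine ⟨c j, hx ▸ hc j, ?_⟩
      rw [hT_c, hx]
      exact routesPorts_transOrient hst (fun _ _ h h' => (Os (c j)).not_both _ _ h.1 h'.1)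
        (delEdge_pendant_in hm hr hsj hs) (delEdge_pendant_out hm hr htj ht)
    · refine ⟨c (j + 1), hP x hx, ?_⟩
      rw [hT_ne _ (Ne.symm hne)]
      exact routesPorts_cycOrient hr (fun _ _ h => (Os _).adj_of_dir h.1) (hP x hx) b
  · rcases ZMod3.sym2_cases hst hsj htj (cycleOn_three_adj.1 hpq) with h | h | h <;>
      simp only [delEdge_congr_sym2 _ h]
    · refine ⟨c j, ?_⟩
      rw [hT_c]
      exact routesPorts_transOrient_delEdge hst (Os (c j)).not_both hs ht
    · rcases hcover with ⟨h', -⟩ | ⟨-, h'⟩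
      exacts [⟨c j, by rwa [hT_c]⟩, ⟨c (j + 1), by rwa [hT_ne _ (Ne.symm hne)]⟩]
    · rcases hcover with ⟨-, h'⟩ | ⟨h', -⟩
      exacts [⟨c (j + 1), by rwa [hT_ne _ (Ne.symm hne)]⟩, ⟨c j, by rwa [hT_c]⟩]

end Combinatorics

theorem AdmitsFrankFamily.localCubicMod {G : SimpleGraph V} {v : V} {m : ZMod 3 → V}
    (hm : m.Injective) (hr : Set.range m = G.neighborSet v) {k : ℕ}
    (h : AdmitsFrankFamily G k) : AdmitsFrankFamily (localCubicMod G v 3 m) k := by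
  obtain ⟨Os, hstrong, hcov⟩ := h
  choose c hc using fun j : ZMod 3 => hcov (m j) v (adj_apply_of_range_eq hr j).symm
  obtain ⟨T, hT⟩ : ∃ T, RoutingFamily v m Os T := by
    rcases ZMod3.injective_or_exists_or_forall c with hinj | ⟨j, heq, hne⟩ | hconst
    · exact exists_routingFamily_of_injective hr hstrong hc hinj
    · exact exists_routingFamily_of_eq_of_ne hm hr hstrong hc heq hne
    · exact ((Os (c 0)).not_forall_edgeDeletable hr fun j => hconst j ▸ hc j).elim
  exact localCubicMod_of_routingFamily hm hr hstrong hcov hT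

theorem stmt_13_general (G : SimpleGraph V) (v : V) (m : ZMod 3 → V) (hm : Function.Injective m)
    (hr : Set.range m = G.neighborSet v) :
    frankNumber (localCubicMod G v 3 m) = frankNumber G :=
  congrArg sInf <| Set.ext fun _ =>
    ⟨AdmitsFrankFamily.of_localCubicMod hm hr, AdmitsFrankFamily.localCubicMod hm hr⟩

/-- If `H` is a cubic `3`-edge-connected graph containing a triangle whose contraction
`H/T` is simple and `3`-edge-connected, then `F(H) = F(H/T)`.  Equivalently (as noted in
the paper), `H` is the truncation of `G = H/T` at the contracted vertex `v_T`. -/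
theorem stmt_13 [Fintype V] (G : SimpleGraph V) (h3 : ThreeEdgeConn G)
    (hcubic : ∀ w, (G.neighborSet w).ncard = 3) (v : V)
    (m : ZMod 3 → V) (hm : Function.Injective m)
    (hr : Set.range m = G.neighborSet v)
    (h3v : ThreeEdgeConn (localCubicMod G v 3 m))
    (hcubicH : ∀ w, ((localCubicMod G v 3 m).neighborSet w).ncard = 3) :
    frankNumber (localCubicMod G v 3 m) = frankNumber G :=
  stmt_13_general G v m hm hr

end Frank
end

section
/- Both Blanuša snarks have Frank number exactly 2. -/
namespace Frank

variable {V : Type*}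

/-- The first Blanuša snark (18 vertices), given by an explicit edge list. -/
def blanusa1 : SimpleGraph (Fin 18) :=
  SimpleGraph.fromRel (fun a b =>
    (a, b) ∈ ([(0, 1), (0, 4), (0, 5), (1, 2), (1, 6), (2, 3), (2, 7), (3, 8), (3, 12), (4, 9), (4, 13), (5, 7), (5, 8), (6, 8), (6, 14), (7, 9), (9, 10), (10, 11), (10, 15), (11, 12), (11, 16), (12, 17), (13, 15), (13, 16), (14, 16), (14, 17), (15, 17)] : List (Fin 18 × Fin 18)))

/-- The second Blanuša snark (18 vertices), given by an explicit edge list. -/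
def blanusa2 : SimpleGraph (Fin 18) :=
  SimpleGraph.fromRel (fun a b =>
    (a, b) ∈ ([(0, 1), (0, 4), (0, 5), (1, 2), (1, 10), (2, 3), (2, 7), (3, 8), (3, 12), (4, 9), (4, 13), (5, 7), (5, 8), (6, 8), (6, 9), (6, 14), (7, 9), (10, 11), (10, 15), (11, 12), (11, 16), (12, 17), (13, 15), (13, 16), (14, 16), (14, 17), (15, 17)] : List (Fin 18 × Fin 18)))

/-!
Deleting an edge `uv` from a strong orientation keeps it strong exactly when `u` and `v` still
reach each other, which a closed walk through `u` and `v` avoiding the edge certifies. Two explicit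
strong orientations of each Blanuša snark, with such closed walks for every edge, give `F ≤ 2`.

Conversely, if every edge is deletable in a single orientation, then at every vertex `a` each arc
leaving `a` can be removed while `a` still has a way out, and dually for entering arcs; so `a` has
two out-neighbours and two in-neighbours, hence degree at least `4`. The Blanuša snarks are cubic.
-/

section ClosedWalk

variable {r : V → V → Prop}

/-- `[x₀, …, xₙ]` is a closed walk when `x₀ → x₁ → ⋯ → xₙ → x₀`. -/
def IsClosedWalk (r : V → V → Prop) (c : List V) : Prop :=
  List.IsChain r (c ++ c.take 1)

instance [DecidableRel r] (c : List V) : Decidable (IsClosedWalk r c) :=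
  inferInstanceAs (Decidable (List.IsChain r _))

theorem IsClosedWalk.reflTransGen {c : List V} (hc : IsClosedWalk r c) {x y : V}
    (hx : x ∈ c) (hy : y ∈ c) : Relation.ReflTransGen r x y := by
  obtain _ | ⟨a, l⟩ := c
  · cases hx
  have hchain : List.IsChain r (a :: (l ++ [a])) := hc
  have hsub : a :: l ⊆ a :: (l ++ [a]) :=
    List.cons_subset_cons _ (List.subset_append_left _ _)
  have to_a : Relation.ReflTransGen r x a :=
    hchain.backwards_induction (Relation.ReflTransGen r · a) _
      (fun _ _ h h' => .head h h') (fun _ => by simp [Relation.ReflTransGen.refl]) x (hsub hx)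
  have from_a : Relation.ReflTransGen r a y :=
    hchain.induction (Relation.ReflTransGen r a ·) _
      (fun _ _ h h' => .tail h' h) (fun _ => .refl) y (hsub hy)
  exact to_a.trans from_a

theorem IsClosedWalk.isStrong {c : List V} (hc : IsClosedWalk r c) (hall : ∀ x, x ∈ c) :
    IsStrong r :=
  fun x y => hc.reflTransGen (hall x) (hall y)

end ClosedWalk

section Deletion

variable {r : V → V → Prop} {u v : V}

instance [DecidableEq V] [DecidableRel r] : DecidableRel (delEdge r u v) :=
  fun _ _ => inferInstanceAs (Decidable (_ ∧ _))

theorem isStrong_delEdge_of_reflTransGen (hs : IsStrong r)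
    (huv : Relation.ReflTransGen (delEdge r u v) u v)
    (hvu : Relation.ReflTransGen (delEdge r u v) v u) : IsStrong (delEdge r u v) := by
  intro x y
  refine Relation.ReflTransGen.lift' id (fun a b hab => ?_) x y (hs x y)
  by_cases hdel : (a = u ∧ b = v) ∨ (a = v ∧ b = u)
  · rcases hdel with ⟨rfl, rfl⟩ | ⟨rfl, rfl⟩
    exacts [huv, hvu]
  · exact .single ⟨hab, hdel⟩

def IsBypass (r : V → V → Prop) (u v : V) (c : List V) : Prop :=
  u ∈ c ∧ v ∈ c ∧ IsClosedWalk (delEdge r u v) c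

instance [DecidableEq V] [DecidableRel r] (c : List V) : Decidable (IsBypass r u v c) :=
  inferInstanceAs (Decidable (_ ∧ _ ∧ _))

theorem IsBypass.isStrong_delEdge {c : List V} (hc : IsBypass r u v c) (hs : IsStrong r) :
    IsStrong (delEdge r u v) :=
  have ⟨hu, hv, hwalk⟩ := hc
  isStrong_delEdge_of_reflTransGen hs (hwalk.reflTransGen hu hv) (hwalk.reflTransGen hv hu)

end Deletion

section Orientation

variable {G : SimpleGraph V}

theorem Orient.exists_out_ne_of_edgeDeletable (O : Orient G) {a b : V} (hab : G.Adj a b)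
    (hdel : EdgeDeletable O a b) : ∃ c ≠ b, O.dir a c := by
  rcases Relation.ReflTransGen.cases_head (hdel a b) with rfl | ⟨c, ⟨hac, hne⟩, -⟩
  · exact (G.ne_of_adj hab rfl).elim
  · exact ⟨c, fun h => hne (.inl ⟨rfl, h⟩), hac⟩

theorem Orient.exists_in_ne_of_edgeDeletable (O : Orient G) {a b : V} (hab : G.Adj a b)
    (hdel : EdgeDeletable O a b) : ∃ c ≠ b, O.dir c a := by
  rcases Relation.ReflTransGen.cases_tail (hdel b a) with h | ⟨c, -, hca, hne⟩
  · exact (G.ne_of_adj hab h).elim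
  · exact ⟨c, fun h => hne (.inr ⟨h, rfl⟩), hca⟩

theorem Orient.four_le_degree_of_edgeDeletable (O : Orient G)
    (hdel : ∀ u v, G.Adj u v → EdgeDeletable O u v) {a b : V} (hab : G.Adj a b)
    [Fintype (G.neighborSet a)] : 4 ≤ G.degree a := by
  have adj_of_out {c : V} (h : O.dir a c) : G.Adj a c := (O.dir_iff a c).mp (.inl h)
  have adj_of_in {c : V} (h : O.dir c a) : G.Adj a c := (O.dir_iff a c).mp (.inr h)
  obtain ⟨x, -, hx⟩ := O.exists_out_ne_of_edgeDeletable hab (hdel a b hab)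
  obtain ⟨y, hyx, hy⟩ :=
    O.exists_out_ne_of_edgeDeletable (adj_of_out hx) (hdel _ _ (adj_of_out hx))
  obtain ⟨z, -, hz⟩ := O.exists_in_ne_of_edgeDeletable hab (hdel a b hab)
  obtain ⟨w, hwz, hw⟩ :=
    O.exists_in_ne_of_edgeDeletable (adj_of_in hz) (hdel _ _ (adj_of_in hz))
  have out_ne_in {p q : V} (hp : O.dir a p) (hq : O.dir q a) : p ≠ q := by
    rintro rfl
    exact O.not_both _ _ hp hq
  rw [← G.card_neighborFinset_eq_degree, Nat.succ_le_iff, Finset.three_lt_card_iff]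
  simp only [SimpleGraph.mem_neighborFinset]
  exact ⟨x, y, z, w, adj_of_out hx, adj_of_out hy, adj_of_in hz, adj_of_in hw, hyx.symm,
    out_ne_in hx hz, out_ne_in hx hw, out_ne_in hy hz, out_ne_in hy hw, hwz.symm⟩

def IsFrankFamily {k : ℕ} (Os : Fin k → Orient G) : Prop :=
  (∀ i, IsStrong (Os i).dir) ∧ ∀ u v, G.Adj u v → ∃ i, EdgeDeletable (Os i) u v

theorem two_le_of_isFrankFamily {a b : V} (hab : G.Adj a b) [Fintype (G.neighborSet a)]
    (hdeg : G.degree a < 4) {k : ℕ} {Os : Fin k → Orient G} (hOs : IsFrankFamily Os) :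
    2 ≤ k := by
  obtain _ | _ | k := k
  · exact (hOs.2 a b hab).elim fun i _ => i.elim0
  · have hdel (u v : V) (huv : G.Adj u v) : EdgeDeletable (Os 0) u v := by
      obtain ⟨i, hi⟩ := hOs.2 u v huv
      rwa [Fin.eq_zero i] at hi
    have := (Os 0).four_le_degree_of_edgeDeletable hdel hab
    omega
  · omega

theorem frankNumber_eq_two {a b : V} (hab : G.Adj a b) [Fintype (G.neighborSet a)]
    (hdeg : G.degree a < 4) {Os : Fin 2 → Orient G} (hOs : IsFrankFamily Os) :
    frankNumber G = 2 :=
  le_antisymm (Nat.sInf_le ⟨Os, hOs⟩)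
    (le_csInf ⟨2, Os, hOs⟩ fun _ ⟨_, h⟩ => two_le_of_isFrankFamily hab hdeg h)

def Orient.ofArcs (A : List (V × V)) (hA : ∀ u v,
      ((u, v) ∈ A ∨ (v, u) ∈ A ↔ G.Adj u v) ∧ ((u, v) ∈ A → (v, u) ∉ A)) :
    Orient G where
  dir u v := (u, v) ∈ A
  dir_iff u v := (hA u v).1
  not_both u v := (hA u v).2

theorem isFrankFamily_ofArcs {k : ℕ} (A : Fin k → List (V × V)) (T : Fin k → List V)
    (B : Fin k → List (List V))
    (hA : ∀ i u v,
      ((u, v) ∈ A i ∨ (v, u) ∈ A i ↔ G.Adj u v) ∧ ((u, v) ∈ A i → (v, u) ∉ A i))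
    (hT : ∀ i, IsClosedWalk (fun x y => (x, y) ∈ A i) (T i) ∧ ∀ x, x ∈ T i)
    (hB : ∀ u v, G.Adj u v →
      ∃ i, ∃ c ∈ T i :: B i, IsBypass (fun x y => (x, y) ∈ A i) u v c) :
    IsFrankFamily fun i => Orient.ofArcs (A i) (hA i) := by
  have hs (i : Fin k) : IsStrong (Orient.ofArcs (G := G) (A i) (hA i)).dir :=
    (hT i).1.isStrong (hT i).2
  refine ⟨hs, fun u v huv => ?_⟩
  obtain ⟨i, c, -, hc⟩ := hB u v huv
  exact ⟨i, hc.isStrong_delEdge (hs i)⟩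

end Orientation

instance : DecidableRel blanusa1.Adj :=
  inferInstanceAs (DecidableRel (SimpleGraph.fromRel _).Adj)

instance : DecidableRel blanusa2.Adj :=
  inferInstanceAs (DecidableRel (SimpleGraph.fromRel _).Adj)

def blanusa1Arcs : Fin 2 → List (Fin 18 × Fin 18) := ![
  [(1, 0), (4, 0), (0, 5), (2, 1), (1, 6), (3, 2), (7, 2), (8, 3), (12, 3), (4, 9), (13, 4),
   (7, 5), (5, 8), (8, 6), (6, 14), (9, 7), (10, 9), (10, 11), (15, 10), (11, 12), (16, 11),
   (12, 17), (15, 13), (16, 13), (14, 16), (14, 17), (17, 15)],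
  [(0, 1), (4, 0), (5, 0), (1, 2), (1, 6), (3, 2), (2, 7), (8, 3), (3, 12), (9, 4), (4, 13),
   (7, 5), (5, 8), (6, 8), (14, 6), (9, 7), (10, 9), (11, 10), (10, 15), (12, 11), (16, 11),
   (12, 17), (15, 13), (13, 16), (14, 16), (17, 14), (17, 15)]]

def blanusa1Tours : Fin 2 → List (Fin 18) := ![
  [0, 5, 8, 6, 14, 16, 13, 4, 9, 7, 2, 1, 6, 14, 17, 15, 10, 11, 12, 3, 2, 1],
  [0, 1, 2, 7, 5, 8, 3, 12, 17, 14, 6, 8, 3, 12, 17, 15, 13, 16, 11, 10, 9, 4]]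

def blanusa1Bypasses : Fin 2 → List (List (Fin 18)) := ![
  [[0, 5, 8, 3, 2, 1, 6, 14, 16, 11, 12, 17, 15, 13, 4],
   [1, 6, 14, 16, 11, 12, 17, 15, 10, 9, 7, 5, 8, 3, 2],
   [4, 0, 5, 8, 6, 14, 17, 15, 10, 9, 7, 2, 1, 6, 14, 16, 13]],
  [[0, 1, 6, 8, 3, 2, 7, 5],
   [0, 1, 6, 8, 3, 12, 17, 14, 16, 11, 10, 9, 4],
   [15, 13, 16, 11, 10, 9, 7, 5, 8, 3, 12, 17, 14, 16, 11, 10]]]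

def blanusa2Arcs : Fin 2 → List (Fin 18 × Fin 18) := ![
  [(0, 1), (4, 0), (0, 5), (1, 2), (10, 1), (2, 3), (2, 7), (8, 3), (3, 12), (9, 4), (13, 4),
   (7, 5), (5, 8), (8, 6), (6, 9), (14, 6), (9, 7), (11, 10), (10, 15), (12, 11), (11, 16),
   (12, 17), (13, 15), (16, 13), (14, 16), (17, 14), (15, 17)],
  [(0, 1), (0, 4), (5, 0), (1, 2), (1, 10), (2, 3), (7, 2), (3, 8), (3, 12), (4, 9), (13, 4),
   (7, 5), (8, 5), (8, 6), (9, 6), (6, 14), (9, 7), (11, 10), (10, 15), (11, 12), (16, 11),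
   (12, 17), (15, 13), (13, 16), (14, 16), (17, 14), (17, 15)]]

def blanusa2Tours : Fin 2 → List (Fin 18) := ![
  [0, 1, 2, 3, 12, 11, 10, 15, 17, 14, 6, 9, 7, 5, 8, 3, 12, 11, 16, 13, 4],
  [0, 1, 2, 3, 8, 6, 14, 16, 11, 12, 17, 14, 16, 11, 10, 15, 13, 4, 9, 7, 5]]

def blanusa2Bypasses : Fin 2 → List (List (Fin 18)) := ![
  [[0, 1, 2, 7, 5, 8, 3, 12, 11, 16, 13, 15, 17, 14, 6, 9, 4],
   [0, 1, 2, 3, 12, 11, 10, 15, 17, 14, 16, 13, 4],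
   [0, 5, 8, 3, 12, 11, 10, 1, 2, 3, 12, 11, 16, 13, 4],
   [3, 12, 11, 10, 1, 2, 7, 5, 8, 6, 9, 4, 0, 1, 2],
   [6, 9, 7, 5, 8, 3, 12, 17, 14, 16, 13, 4, 0, 5, 8],
   [10, 1, 2, 3, 12, 11, 16, 13, 15, 17, 14, 6, 9, 7, 5, 8, 3, 12, 11]],
  [[0, 1, 10, 15, 13, 4, 9, 7, 2, 3, 8, 5],
   [4, 9, 6, 14, 16, 11, 12, 17, 15, 13],
   [2, 3, 12, 17, 14, 16, 11, 10, 15, 13, 4, 9, 7],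
   [10, 15, 13, 16, 11, 12, 17, 15, 13, 4, 9, 7, 5, 0, 1]]]

theorem frankNumber_blanusa1 : frankNumber blanusa1 = 2 :=
  frankNumber_eq_two (a := 0) (b := 1) (by decide) (by decide) <|
    isFrankFamily_ofArcs blanusa1Arcs blanusa1Tours blanusa1Bypasses (by decide) (by decide)
      (by decide)

theorem frankNumber_blanusa2 : frankNumber blanusa2 = 2 :=
  frankNumber_eq_two (a := 0) (b := 1) (by decide) (by decide) <|
    isFrankFamily_ofArcs blanusa2Arcs blanusa2Tours blanusa2Bypasses (by decide) (by decide)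
      (by decide)

theorem stmt_17 : frankNumber blanusa1 = 2 ∧ frankNumber blanusa2 = 2 :=
  ⟨frankNumber_blanusa1, frankNumber_blanusa2⟩

end Frank
end
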